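/- Let R be a commutative ring, S a multiplicative subset of R, M an R-module, and A_1, …, A_n finitely many R-modules. Then M is u-S-projective relative to the direct sum ⊕_{i=1}^n A_i if and only if M is u-S-projective relative to each A_i. -/

import Mathlib

universe u v w

variable (R : Type u) [CommRing R]

/-- An `R`-module `T` is uniformly `S`-torsion if there is `s ∈ S` with `s • T = 0`. -/
def IsUSTorsion (S : Submonoid R) (T : Type*) [AddCommGroup T] [Module R T] : Prop :=
  ∃ s ∈ S, ∀ t : T, s • t = 0

/-- `f` is a `u`-`S`-epimorphism if its cokernel is uniformly `S`-torsion. -/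
def IsUSEpi (S : Submonoid R) {M N : Type*} [AddCommGroup M] [Module R M]
    [AddCommGroup N] [Module R N] (f : M →ₗ[R] N) : Prop :=
  IsUSTorsion R S (N ⧸ LinearMap.range f)

/-- `f` is a `u`-`S`-monomorphism if its kernel is uniformly `S`-torsion. -/
def IsUSMono (S : Submonoid R) {M N : Type*} [AddCommGroup M] [Module R M]
    [AddCommGroup N] [Module R N] (f : M →ₗ[R] N) : Prop :=
  IsUSTorsion R S (LinearMap.ker f)

/-- `P` is `u`-`S`-projective relative to `M` if for every `u`-`S`-epimorphism
`f : M → N`, the induced map `Hom(P,M) → Hom(P,N)` is a `u`-`S`-epimorphism. -/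
def IsUSProjRel (S : Submonoid R) (P : Type w) [AddCommGroup P] [Module R P]
    (M : Type v) [AddCommGroup M] [Module R M] : Prop :=
  ∀ (N : Type v) [AddCommGroup N] [Module R N] (f : M →ₗ[R] N),
    IsUSEpi R S f → IsUSEpi R S (LinearMap.llcomp (σ₁₂ := RingHom.id R) (σ₁₃ := RingHom.id R) R P M N f)

/-- `E` is `u`-`S`-injective relative to `M` if for every `u`-`S`-monomorphism
`f : K → M`, the induced map `Hom(M,E) → Hom(K,E)` is a `u`-`S`-epimorphism. -/
def IsUSInjRel (S : Submonoid R) (E : Type w) [AddCommGroup E] [Module R E]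
    (M : Type v) [AddCommGroup M] [Module R M] : Prop :=
  ∀ (K : Type v) [AddCommGroup K] [Module R K] (f : K →ₗ[R] M),
    IsUSMono R S f → IsUSEpi R S (LinearMap.lcomp R E f)


lemma isUSEpi_iff' (S : Submonoid R) {M N : Type*} [AddCommGroup M] [Module R M]
    [AddCommGroup N] [Module R N] (f : M →ₗ[R] N) :
    IsUSEpi R S f ↔ ∃ s ∈ S, ∀ n : N, s • n ∈ LinearMap.range f := by
  unfold IsUSEpi IsUSTorsion
  constructor
  · rintro ⟨s, hs, h⟩
    refine ⟨s, hs, fun n => ?_⟩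
    have := h (Submodule.Quotient.mk n)
    rwa [← Submodule.Quotient.mk_smul, Submodule.Quotient.mk_eq_zero] at this
  · rintro ⟨s, hs, h⟩
    refine ⟨s, hs, fun t => ?_⟩
    obtain ⟨n, rfl⟩ := Submodule.Quotient.mk_surjective _ t
    rw [← Submodule.Quotient.mk_smul, Submodule.Quotient.mk_eq_zero]
    exact h n

lemma retractRel (S : Submonoid R) {P : Type w} [AddCommGroup P] [Module R P]
    {A B : Type v} [AddCommGroup A] [Module R A] [AddCommGroup B] [Module R B]
    (ι : B →ₗ[R] A) (π : A →ₗ[R] B) (hπι : π.comp ι = LinearMap.id)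
    (hA : IsUSProjRel R S P A) : IsUSProjRel R S P B := by
  intro N _ _ f hf
  have hb : ∀ b : B, π (ι b) = b := fun b => congrArg (· b) hπι
  have hfπ : IsUSEpi R S (f.comp π) := by
    rw [isUSEpi_iff'] at hf ⊢
    obtain ⟨s, hs, h'⟩ := hf
    refine ⟨s, hs, fun n => ?_⟩
    obtain ⟨b, hb'⟩ := h' n
    exact ⟨ι b, by simp [hb, hb']⟩
  have := hA N (f.comp π) hfπ
  rw [isUSEpi_iff'] at this ⊢
  obtain ⟨s, hs, h'⟩ := this
  refine ⟨s, hs, fun g => ?_⟩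
  obtain ⟨h₀, hh⟩ := h' g
  refine ⟨π.comp h₀, ?_⟩
  simp only [LinearMap.llcomp_apply'] at hh ⊢
  rw [← LinearMap.comp_assoc]
  exact hh

lemma prodRel (S : Submonoid R) {P : Type w} [AddCommGroup P] [Module R P]
    {A B : Type v} [AddCommGroup A] [Module R A] [AddCommGroup B] [Module R B]
    (hA : IsUSProjRel R S P A) (hB : IsUSProjRel R S P B) :
    IsUSProjRel R S P (A × B) := by
  intro N _ _ f hf
  set fA : A →ₗ[R] N := f.comp (LinearMap.inl R A B) with hfA_def
  set fB : B →ₗ[R] N := f.comp (LinearMap.inr R A B) with hfB_def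
  rw [isUSEpi_iff'] at hf
  obtain ⟨s₀, hs₀, h₀⟩ := hf
  set K : Submodule R N := LinearMap.range fA with hK_def
  set q : N →ₗ[R] N ⧸ K := K.mkQ with hq_def
  have hqfB : IsUSEpi R S (q.comp fB) := by
    rw [isUSEpi_iff']
    refine ⟨s₀, hs₀, fun x => ?_⟩
    obtain ⟨n, rfl⟩ := Submodule.Quotient.mk_surjective K x
    obtain ⟨⟨a, b⟩, hab⟩ := h₀ n
    refine ⟨b, ?_⟩
    have hsplit : fA a + fB b = s₀ • n := by
      rw [hfA_def, hfB_def]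
      simp only [LinearMap.comp_apply, LinearMap.inl_apply, LinearMap.inr_apply, ← map_add]
      simpa using hab
    have : q (fA a + fB b) = q (s₀ • n) := congrArg q hsplit
    rw [map_add] at this
    have hqa : q (fA a) = 0 := by
      rw [hq_def, Submodule.mkQ_apply, Submodule.Quotient.mk_eq_zero]
      exact ⟨a, rfl⟩
    rw [hqa, zero_add] at this
    rw [LinearMap.comp_apply, this]
    rw [hq_def, Submodule.mkQ_apply, ← Submodule.Quotient.mk_smul]
  have hB' := hB (N ⧸ K) (q.comp fB) hqfB
  have hfA' : IsUSEpi R S fA.rangeRestrict := by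
    rw [isUSEpi_iff']
    refine ⟨1, S.one_mem, fun k => ?_⟩
    obtain ⟨a, ha⟩ := fA.surjective_rangeRestrict k
    exact ⟨a, by simp [ha]⟩
  have hA' := hA K fA.rangeRestrict hfA'
  rw [isUSEpi_iff'] at hA' hB' ⊢
  obtain ⟨s₂, hs₂, h₂⟩ := hA'
  obtain ⟨s₁, hs₁, h₁⟩ := hB'
  refine ⟨s₂ * s₁, S.mul_mem hs₂ hs₁, fun g => ?_⟩
  obtain ⟨hB₀, hhB⟩ := h₁ (q.comp g)
  simp only [LinearMap.llcomp_apply'] at hhB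
  have hmem : ∀ x : P, (s₁ • g - fB.comp hB₀) x ∈ K := by
    intro x
    have hx : q ((s₁ • g) x) = q ((fB.comp hB₀) x) := by
      have := congrArg (· x) hhB
      simp only [LinearMap.comp_apply, LinearMap.smul_apply] at this ⊢
      rw [this, map_smul]
    have : q ((s₁ • g - fB.comp hB₀) x) = 0 := by
      rw [LinearMap.sub_apply, map_sub, hx, sub_self]
    rwa [hq_def, Submodule.mkQ_apply, Submodule.Quotient.mk_eq_zero] at this
  obtain ⟨hA₀, hhA⟩ := h₂ (LinearMap.codRestrict K (s₁ • g - fB.comp hB₀) hmem)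
  simp only [LinearMap.llcomp_apply'] at hhA
  refine ⟨(LinearMap.inl R A B).comp hA₀ + s₂ • (LinearMap.inr R A B).comp hB₀, ?_⟩
  simp only [LinearMap.llcomp_apply']
  ext x
  have hAx : fA (hA₀ x) = s₂ • ((s₁ • g - fB.comp hB₀) x) := by
    have := congrArg (fun z => ((z : P →ₗ[R] K) x : N)) hhA
    simpa [LinearMap.codRestrict] using this
  simp only [LinearMap.comp_apply, LinearMap.add_apply, LinearMap.smul_apply,
    LinearMap.inl_apply, LinearMap.inr_apply, map_add, map_smul]
  have e1 : f (hA₀ x, 0) = fA (hA₀ x) := rfl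
  have e2 : f (0, hB₀ x) = fB (hB₀ x) := rfl
  rw [e1, e2, hAx]
  simp only [LinearMap.sub_apply, LinearMap.smul_apply, smul_sub, LinearMap.comp_apply]
  rw [sub_add_cancel, mul_smul]

lemma subsingletonRel (S : Submonoid R) {P : Type w} [AddCommGroup P] [Module R P]
    (T : Type v) [AddCommGroup T] [Module R T] [Subsingleton T] :
    IsUSProjRel R S P T := by
  intro N _ _ f hf
  rw [isUSEpi_iff'] at hf ⊢
  obtain ⟨s₀, hs₀, h₀⟩ := hf
  refine ⟨s₀, hs₀, fun g => ⟨0, ?_⟩⟩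
  simp only [LinearMap.llcomp_apply']
  ext x
  obtain ⟨t, ht⟩ := h₀ (g x)
  have : t = 0 := Subsingleton.elim t 0
  rw [this, map_zero] at ht
  simp [← ht]

lemma piRel (S : Submonoid R) {P : Type w} [AddCommGroup P] [Module R P] :
    ∀ (n : ℕ) (A : Fin n → Type v) [∀ i, AddCommGroup (A i)] [∀ i, Module R (A i)],
    (∀ i, IsUSProjRel R S P (A i)) → IsUSProjRel R S P (∀ i, A i) := by
  intro n
  induction n with
  | zero =>
    intro A _ _ _
    exact subsingletonRel R S (∀ i, A i)
  | succ n ih =>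
    intro A _ _ h
    let fwd : (∀ i, A i) →ₗ[R] A 0 × ∀ i : Fin n, A i.succ :=
      LinearMap.prod (LinearMap.proj 0) (LinearMap.pi fun i => LinearMap.proj i.succ)
    let bwd : (A 0 × ∀ i : Fin n, A i.succ) →ₗ[R] ∀ i, A i :=
      LinearMap.pi (fun j => Fin.cases (LinearMap.fst R (A 0) (∀ i : Fin n, A i.succ))
        (fun i => (LinearMap.proj i).comp (LinearMap.snd R (A 0) (∀ i : Fin n, A i.succ))) j)
    have hcomp : bwd.comp fwd = LinearMap.id := by
      apply LinearMap.ext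
      intro x
      funext j
      induction j using Fin.cases with
      | zero => simp [fwd, bwd]
      | succ i => simp [fwd, bwd]
    exact retractRel R S fwd bwd hcomp
      (prodRel R S (h 0) (ih (fun i => A i.succ) (fun i => h i.succ)))

open DirectSum in
theorem stmt10 (S : Submonoid R) (hS : (0 : R) ∉ S)
    (M : Type w) [AddCommGroup M] [Module R M]
    (n : ℕ) (A : Fin n → Type v) [∀ i, AddCommGroup (A i)] [∀ i, Module R (A i)] :
    IsUSProjRel R S M (⨁ i, A i) ↔ ∀ i, IsUSProjRel R S M (A i) := by
  constructor
  · intro h i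
    refine retractRel R S (DirectSum.lof R (Fin n) A i) (DirectSum.component R (Fin n) A i)
      ?_ h
    apply LinearMap.ext
    intro a
    simp [DirectSum.component.lof_self]
  · intro h
    have hpi := piRel R S n A h
    refine retractRel R S (DirectSum.linearEquivFunOnFintype R (Fin n) A).toLinearMap
      (DirectSum.linearEquivFunOnFintype R (Fin n) A).symm.toLinearMap ?_ hpi
    apply LinearMap.ext
    intro x
    simp
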